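/- arXiv:2507.02728 — 7 statements merged into one kernel-verified Lean document; each statement's English description precedes it below -/
import Mathlib

section
/- Let Σ = {c_1, …, c_σ} be a finite ordered alphabet, let n ≥ 1, and let n_1, …, n_σ be nonnegative integers with n_1 + … + n_σ = n − 1. Then the number of tries over Σ with n nodes in which exactly n_i edges are labeled c_i for each i (equivalently, the number of prefix-closed sets S of strings over Σ with |S| = n such that exactly n_i elements of S are nonempty strings ending with c_i) equals (1/n) · ∏_{i=1}^{σ} C(n, n_i), where C(n, m) denotes the binomial coefficient. -/
/-!
List the nodes of a trie in lexicographic order and record, for each node, the set of labels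
of its children. This gives a word `w₀ ⋯ wₙ₋₁` whose letters are subsets of `Σ`, in which
exactly `nᵢ` letters contain `cᵢ`, and which satisfies the Łukasiewicz condition
`|w₀| + ⋯ + |wₖ₋₁| ≥ k` for `k < n`, since the nodes `1, …, k` are children of nodes
before `k`. Conversely, such a word is decoded greedily, by repeatedly adding the
lexicographically least child not yet present, so the encoding is a bijection onto these words.

Since `∑ |wⱼ| = n - 1`, the cycle lemma says that exactly one of the `n` cyclic rotations of
any word with the prescribed letter counts satisfies the Łukasiewicz condition. Choosing
independently, for each `i`, the `nᵢ` positions whose letter contains `cᵢ` gives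
`∏ C(n, nᵢ)` words, whence `n · #tries = ∏ C(n, nᵢ)`.
-/

open Finset

namespace TrieCount

variable {σ n : ℕ}

theorem lt_append_singleton {α : Type*} [LinearOrder α] (s : List α) (c : α) : s < s ++ [c] := by
  simpa using List.Lex.append_left (· < ·) (List.Lex.nil (a := c) (l := [])) s

theorem nil_le {α : Type*} [LinearOrder α] (s : List α) : [] ≤ s := by
  cases s
  exacts [le_rfl, le_of_lt List.Lex.nil]

theorem nil_lt_append_singleton {α : Type*} [LinearOrder α] (s : List α) (c : α) :
    [] < s ++ [c] := by
  cases s <;> exact List.Lex.nil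

section Words

/-- A word of length `n` over the alphabet of subsets of `Fin σ`; `nd i` counts the letters
containing `i`. -/
def HasLetterCounts (nd : Fin σ → ℕ) (w : Fin n → Finset (Fin σ)) : Prop :=
  ∀ i, #{j | i ∈ w j} = nd i

def transposeEquiv : (Fin n → Finset (Fin σ)) ≃ (Fin σ → Finset (Fin n)) where
  toFun w i := {j | i ∈ w j}
  invFun P j := {i | j ∈ P i}
  left_inv w := by ext; simp
  right_inv P := by ext; simp

theorem ncard_setOf_hasLetterCounts (nd : Fin σ → ℕ) :
    {w : Fin n → Finset (Fin σ) | HasLetterCounts nd w}.ncard = ∏ i, n.choose (nd i) := by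
  have e : {w : Fin n → Finset (Fin σ) | HasLetterCounts nd w} ≃
      ∀ i, {P : Finset (Fin n) // #P = nd i} :=
    (transposeEquiv.subtypeEquiv (q := fun P => ∀ i, #(P i) = nd i) fun _ => Iff.rfl).trans
      (Equiv.subtypePiEquivPi (p := fun i P => #P = nd i))
  rw [← Nat.card_coe_set_eq, Nat.card_congr e, Nat.card_pi]
  simp [Nat.card_eq_fintype_card, Fintype.card_finset_len]

theorem sum_card_eq_of_hasLetterCounts {nd : Fin σ → ℕ} {w : Fin n → Finset (Fin σ)}
    (hw : HasLetterCounts nd w) : ∑ j, #(w j) = ∑ i, nd i := by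
  calc ∑ j, #(w j) = ∑ j, ∑ i, if i ∈ w j then 1 else 0 := by simp
    _ = ∑ i, #{j | i ∈ w j} := by rw [sum_comm]; simp
    _ = ∑ i, nd i := sum_congr rfl fun i _ => hw i

end Words

/-- The Łukasiewicz condition. -/
def IsDominating (w : Fin n → Finset (Fin σ)) : Prop :=
  ∀ k < n, k ≤ ∑ m with m.val < k, #(w m)

def childPairs (w : Fin n → Finset (Fin σ)) (k : ℕ) : Finset (Σ _ : Fin n, Fin σ) :=
  ({m | m.val < k} : Finset (Fin n)).sigma w

theorem card_childPairs (w : Fin n → Finset (Fin σ)) (k : ℕ) :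
    #(childPairs w k) = ∑ m with m.val < k, #(w m) :=
  card_sigma _ _

/-- The cycle lemma of Dvoretzky and Motzkin, stated for the sequence `g` of partial sums. -/
theorem existsUnique_lt_forall_le_add {g : ℕ → ℤ} (hn : 0 < n)
    (hg : ∀ m, g (m + n) = g m - 1) : ∃! r, r < n ∧ ∀ k < n, g r ≤ g (r + k) := by
  have hmin : ∃ r, r < n ∧ ∀ m < n, g r ≤ g m := by
    obtain ⟨r, hr, hmin⟩ := exists_min_image (range n) g ⟨0, mem_range.2 hn⟩
    exact ⟨r, mem_range.1 hr, fun m hm => hmin m (mem_range.2 hm)⟩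
  classical
  -- `r` is the first position where `g` attains its minimum over one period
  set r := Nat.find hmin
  obtain ⟨hrn, hr⟩ : r < n ∧ ∀ m < n, g r ≤ g m := Nat.find_spec hmin
  have before : ∀ m < r, g r < g m := fun m hm => by
    by_contra! h
    exact Nat.find_min hmin hm ⟨hm.trans hrn, fun m' hm' => h.trans (hr m' hm')⟩
  refine ⟨r, ⟨hrn, fun k hk => ?_⟩, fun r' ⟨hr'n, hr'⟩ => ?_⟩
  · rcases lt_or_ge (r + k) n with h | h
    · exact hr _ h
    · have hlt := before (r + k - n) (by omega)
      have hshift := hg (r + k - n)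
      rw [Nat.sub_add_cancel h] at hshift
      omega
  · rcases lt_trichotomy r' r with h | h | h
    · have := hr' (r - r') (by omega)
      rw [Nat.add_sub_cancel' h.le] at this
      exact absurd (before r' h) (not_lt.2 this)
    · exact h
    · have hle := hr' (r + n - r') (by omega)
      rw [show r' + (r + n - r') = r + n by omega, hg] at hle
      have := hr r' hr'n
      omega

section Rotation

open Fin.NatCast

variable [NeZero n]

def rotate (r : Fin n) (w : Fin n → Finset (Fin σ)) : Fin n → Finset (Fin σ) :=
  fun j => w (j + r)

@[simp]
theorem rotate_zero (w : Fin n → Finset (Fin σ)) : rotate 0 w = w := by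
  unfold rotate; simp

@[simp]
theorem rotate_rotate (r s : Fin n) (w : Fin n → Finset (Fin σ)) :
    rotate r (rotate s w) = rotate (r + s) w := by
  unfold rotate; simp [add_assoc]

theorem HasLetterCounts.rotate {nd : Fin σ → ℕ} {w : Fin n → Finset (Fin σ)}
    (hw : HasLetterCounts nd w) (r : Fin n) : HasLetterCounts nd (rotate r w) := fun i =>
  (card_equiv (Equiv.addRight r) fun j => by rw [mem_filter]; simp [TrieCount.rotate]).trans (hw i)

theorem sum_filter_val_lt_eq_sum_range {M : Type*} [AddCommMonoid M] (F : Fin n → M) {k : ℕ}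
    (hk : k ≤ n) : ∑ m with m.val < k, F m = ∑ j ∈ range k, F j := by
  have hmod : ∀ j < k, j % n = j := fun j hj => Nat.mod_eq_of_lt (hj.trans_le hk)
  refine sum_nbij' (fun m => m.val) (fun j => j) ?_ ?_ ?_ ?_ ?_ <;> simp +contextual [hmod]

/-- Indices are read modulo `n`, through the cast `ℕ → Fin n`. -/
def excess (w : Fin n → Finset (Fin σ)) (m : ℕ) : ℤ :=
  ∑ j ∈ range m, ((#(w j) : ℤ) - 1)

theorem excess_add_self {w : Fin n → Finset (Fin σ)} (hw : ∑ j, #(w j) + 1 = n) (m : ℕ) :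
    excess w (m + n) = excess w m - 1 := by
  have period : excess w n = -1 := by
    have h := Fin.sum_univ_eq_sum_range (fun j => (#(w j) : ℤ) - 1) n
    simp only [Fin.cast_val_eq_self] at h
    have total : ∑ j, (#(w j) : ℤ) = n - 1 := by rw [← Nat.cast_sum]; omega
    simp [excess, ← h, sum_sub_distrib, total]
  rw [add_comm, excess, sum_range_add, ← excess, period]
  simp [excess]
  ring

theorem isDominating_rotate_iff (w : Fin n → Finset (Fin σ)) (r : Fin n) :
    IsDominating (rotate r w) ↔ ∀ k < n, excess w r ≤ excess w (r + k) := by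
  refine forall₂_congr fun k hk => ?_
  have : excess w (r + k) = excess w r + ∑ j ∈ range k, ((#(rotate r w j) : ℤ) - 1) := by
    rw [excess, excess, sum_range_add]
    congr 1
    refine sum_congr rfl fun j _ => ?_
    rw [rotate, Nat.cast_add, Fin.cast_val_eq_self, add_comm r]
  rw [sum_filter_val_lt_eq_sum_range _ hk.le, this, sum_sub_distrib]
  simp only [sum_const, card_range, nsmul_eq_mul, mul_one, ← Nat.cast_sum]
  omega

theorem existsUnique_isDominating_rotate {w : Fin n → Finset (Fin σ)}
    (hw : ∑ j, #(w j) + 1 = n) : ∃! r : Fin n, IsDominating (rotate r w) := by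
  obtain ⟨r, ⟨hr, hmin⟩, huniq⟩ :=
    existsUnique_lt_forall_le_add (NeZero.pos n) (excess_add_self hw)
  refine ⟨⟨r, hr⟩, (isDominating_rotate_iff w _).2 hmin, fun r' hr' => Fin.ext ?_⟩
  exact huniq r' ⟨r'.isLt, (isDominating_rotate_iff w r').1 hr'⟩

end Rotation

theorem ncard_setOf_hasLetterCounts_eq_mul {nd : Fin σ → ℕ} (hsum : ∑ i, nd i + 1 = n) :
    {w : Fin n → Finset (Fin σ) | HasLetterCounts nd w}.ncard =
      n * {w : Fin n → Finset (Fin σ) | HasLetterCounts nd w ∧ IsDominating w}.ncard := by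
  have : NeZero n := ⟨by omega⟩
  have total {w : Fin n → Finset (Fin σ)} (hw : HasLetterCounts nd w) :
      ∑ j, #(w j) + 1 = n := by rwa [sum_card_eq_of_hasLetterCounts hw]
  let φ : Fin n × {w : Fin n → Finset (Fin σ) | HasLetterCounts nd w ∧ IsDominating w} →
      {w : Fin n → Finset (Fin σ) | HasLetterCounts nd w} :=
    fun p => ⟨rotate p.1 p.2, p.2.2.1.rotate p.1⟩
  have hφ : φ.Bijective := by
    constructor
    · intro ⟨r, w, hw, hdom⟩ ⟨r', w', _, hdom'⟩ hφ
      have h : rotate r w = rotate r' w' := congrArg Subtype.val hφ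
      have hw' : w' = rotate (-r' + r) w := by
        rw [← rotate_rotate, h, rotate_rotate, neg_add_cancel, rotate_zero]
      obtain ⟨r₀, -, huniq⟩ := existsUnique_isDominating_rotate (total hw)
      have hr : -r' + r = 0 :=
        (huniq _ (by beta_reduce; rwa [← hw'])).trans (huniq 0 (by simpa using hdom)).symm
      obtain rfl : r' = r := neg_add_eq_zero.1 hr
      simp_all
    · rintro ⟨w, hw⟩
      obtain ⟨r, hr, -⟩ := existsUnique_isDominating_rotate (total hw)
      exact ⟨(-r, ⟨rotate r w, hw.rotate r, hr⟩), Subtype.ext (by simp [φ])⟩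
  rw [← Nat.card_coe_set_eq, ← Nat.card_congr (Equiv.ofBijective φ hφ), Nat.card_prod,
    Nat.card_coe_set_eq, Nat.card_eq_fintype_card, Fintype.card_fin]

section Nodes

variable {S T : Finset (List (Fin σ))} {j k : ℕ}

/-- The `j`-th element of `S` in lexicographic order, or `[]` if `#S ≤ j`. -/
def node (S : Finset (List (Fin σ))) (j : ℕ) : List (Fin σ) :=
  (S.sort (· ≤ ·)).getD j []

theorem node_eq_getElem (hj : j < #S) :
    node S j = (S.sort (· ≤ ·))[j]'(by rwa [length_sort]) :=
  List.getD_eq_getElem _ _ _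

theorem node_mem (hj : j < #S) : node S j ∈ S := by
  rw [node_eq_getElem hj, ← mem_sort (· ≤ ·)]
  exact List.getElem_mem _

theorem exists_node_eq {x : List (Fin σ)} (hx : x ∈ S) : ∃ j < #S, node S j = x := by
  obtain ⟨j, hj, rfl⟩ := List.mem_iff_getElem.1 ((mem_sort (· ≤ ·)).2 hx)
  rw [length_sort] at hj
  exact ⟨j, hj, node_eq_getElem hj⟩

theorem node_lt_node_iff (hj : j < #S) (hk : k < #S) : node S j < node S k ↔ j < k := by
  rw [node_eq_getElem hj, node_eq_getElem hk]
  exact S.sortedLT_sort.getElem_lt_getElem_iff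

theorem node_inj (hj : j < #S) (hk : k < #S) : node S j = node S k ↔ j = k := by
  rw [node_eq_getElem hj, node_eq_getElem hk]
  exact S.sortedLT_sort.nodup.getElem_inj_iff

theorem node_le_of_mem {x : List (Fin σ)} (hx : x ∈ S) (hj : j < #S)
    (hne : ∀ i < j, node S i ≠ x) : node S j ≤ x := by
  obtain ⟨k, hk, rfl⟩ := exists_node_eq hx
  exact not_lt.1 fun hkj => hne k ((node_lt_node_iff hk hj).1 hkj) rfl

theorem node_zero (hnil : [] ∈ S) : node S 0 = [] := by
  refine le_antisymm ?_ (nil_le _)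
  exact node_le_of_mem hnil (card_pos.2 ⟨_, hnil⟩) fun _ h => absurd h (Nat.not_lt_zero _)

theorem eq_of_node_eq (hS : #S = n) (hT : #T = n) (h : ∀ j < n, node S j = node T j) :
    S = T := by
  rw [← sort_toFinset S (· ≤ ·), ← sort_toFinset T (· ≤ ·)]
  congr 1
  refine List.ext_getElem (by simp [hS, hT]) fun j hjS hjT => ?_
  rw [length_sort] at hjS hjT
  rw [← node_eq_getElem hjS, ← node_eq_getElem hjT]
  exact h j (hS ▸ hjS)

theorem node_toFinset {L : List (List (Fin σ))} (hL : L.SortedLT) (j : ℕ) :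
    node L.toFinset j = L.getD j [] := by
  rw [node, (List.toFinset_sort _ hL.nodup).2 hL.sortedLE.pairwise]

end Nodes

section Tries

variable {S T : Finset (List (Fin σ))} {j : ℕ}

def IsPrefixClosed (S : Finset (List (Fin σ))) : Prop :=
  ∀ s c, s ++ [c] ∈ S → s ∈ S

def tries (n : ℕ) (nd : Fin σ → ℕ) : Set (Finset (List (Fin σ))) :=
  {S | #S = n ∧ [] ∈ S ∧ IsPrefixClosed S ∧ ∀ i, #{s ∈ S | s.getLast? = some i} = nd i}

def childWord (n : ℕ) (S : Finset (List (Fin σ))) : Fin n → Finset (Fin σ) :=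
  fun j => {c | node S j ++ [c] ∈ S}

theorem mem_childWord {j : Fin n} {c : Fin σ} : c ∈ childWord n S j ↔ node S j ++ [c] ∈ S := by
  simp [childWord]

theorem exists_parent (hcl : IsPrefixClosed S) (hj : j < #S) (hne : node S j ≠ []) :
    ∃ m < j, ∃ c, node S m ++ [c] = node S j := by
  obtain hnil | ⟨s, c, hsc⟩ := List.eq_nil_or_concat' (node S j)
  · exact absurd hnil hne
  obtain ⟨m, hm, rfl⟩ := exists_node_eq (hcl s c (hsc ▸ node_mem hj))
  refine ⟨m, ?_, c, hsc.symm⟩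
  rw [← node_lt_node_iff hm hj, hsc]
  exact lt_append_singleton _ _

theorem card_filter_mem_childWord (hcl : IsPrefixClosed S) (hS : #S = n) (i : Fin σ) :
    #{j | i ∈ childWord n S j} = #{s ∈ S | s.getLast? = some i} := by
  refine card_bij (fun j _ => node S j ++ [i]) (fun j hj => ?_) (fun j _ k _ hjk => ?_) ?_
  · simpa [mem_childWord] using hj
  · exact Fin.ext ((node_inj (hS ▸ j.isLt) (hS ▸ k.isLt)).1 (List.append_inj_left' hjk rfl))
  · intro t ht
    obtain ⟨htS, s, rfl⟩ : t ∈ S ∧ ∃ s, t = s ++ [i] := by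
      simpa [List.getLast?_eq_some_iff] using ht
    obtain ⟨m, hm, rfl⟩ := exists_node_eq (hcl s i htS)
    exact ⟨⟨m, hS ▸ hm⟩, by simpa [mem_childWord] using htS, rfl⟩

theorem isDominating_childWord (hnil : [] ∈ S) (hcl : IsPrefixClosed S) (hS : #S = n) :
    IsDominating (childWord n S) := by
  intro k hk
  -- the nodes `1, …, k` are children of nodes among `0, …, k - 1`
  have hsub : (Icc 1 k).image (node S) ⊆
      (childPairs (childWord n S) k).image fun p => node S p.1 ++ [p.2] := by
    intro t ht
    obtain ⟨l, hl, rfl⟩ := mem_image.1 ht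
    obtain ⟨hl1, hlk⟩ := mem_Icc.1 hl
    have hne : node S l ≠ [] := by
      rw [← node_zero hnil, Ne, node_inj (by omega) (by omega)]
      omega
    obtain ⟨m, hml, c, hc⟩ := exists_parent hcl (by omega) hne
    refine mem_image.2 ⟨⟨⟨m, by omega⟩, c⟩, ?_, hc⟩
    simp only [childPairs, mem_sigma, mem_filter, mem_univ, true_and, mem_childWord]
    exact ⟨hml.trans_le hlk, hc ▸ node_mem (by omega)⟩
  calc k = #((Icc 1 k).image (node S)) := by
        rw [card_image_of_injOn fun a ha b hb h => (node_inj (by simp at ha; omega)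
          (by simp at hb; omega)).1 h]
        simp
    _ ≤ #(childPairs (childWord n S) k) := (card_le_card hsub).trans card_image_le
    _ = _ := card_childPairs _ _

theorem node_mem_of_childWord_eq (hnil : [] ∈ T) (hcl : IsPrefixClosed S) (hS : #S = n)
    (h : childWord n S = childWord n T) (hj : j < n) (hbelow : ∀ i < j, node S i = node T i) :
    node S j ∈ T := by
  by_cases hne : node S j = []
  · exact hne ▸ hnil
  obtain ⟨m, hmj, c, hc⟩ := exists_parent hcl (hS ▸ hj) hne
  have hcS : c ∈ childWord n S ⟨m, by omega⟩ := mem_childWord.2 (hc ▸ node_mem (by omega))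
  rw [h, mem_childWord] at hcS
  rwa [← hc, hbelow m hmj]

theorem eq_of_childWord_eq (hSn : #S = n) (hSnil : [] ∈ S) (hScl : IsPrefixClosed S)
    (hTn : #T = n) (hTnil : [] ∈ T) (hTcl : IsPrefixClosed T)
    (h : childWord n S = childWord n T) : S = T := by
  refine eq_of_node_eq hSn hTn fun j => Nat.strong_induction_on j fun j ih hj => ?_
  have ih : ∀ i < j, node S i = node T i := fun i hi => ih i hi (hi.trans hj)
  have hTS := node_mem_of_childWord_eq hSnil hTcl hTn h.symm hj fun i hi => (ih i hi).symm
  have hST := node_mem_of_childWord_eq hTnil hScl hSn h hj ih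
  -- each of `node S j`, `node T j` is the least element of its trie not matched so far
  refine le_antisymm (node_le_of_mem hTS (hSn ▸ hj) fun i hi => ?_)
    (node_le_of_mem hST (hTn ▸ hj) fun i hi => ?_)
  · rw [ih i hi, Ne, node_inj (by omega) (by omega)]; omega
  · rw [← ih i hi, Ne, node_inj (by omega) (by omega)]; omega

end Tries

section Decoding

variable {w : Fin n → Finset (Fin σ)} {L : List (List (Fin σ))}

def childOf (L : List (List (Fin σ))) (p : Σ _ : Fin n, Fin σ) : List (Fin σ) :=
  L.getD p.1 [] ++ [p.2]

def candidates (w : Fin n → Finset (Fin σ)) (L : List (List (Fin σ))) :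
    Finset (List (Fin σ)) :=
  (childPairs w L.length).image (childOf L) \ L.toFinset

theorem mem_candidates {u : List (Fin σ)} :
    u ∈ candidates w L ↔ (∃ p ∈ childPairs w L.length, childOf L p = u) ∧ u ∉ L := by
  simp [candidates]

theorem mem_childPairs {k : ℕ} {p : Σ _ : Fin n, Fin σ} :
    p ∈ childPairs w k ↔ p.1.val < k ∧ p.2 ∈ w p.1 := by
  simp [childPairs]

theorem childOf_append {L' : List (List (Fin σ))} {p : Σ _ : Fin n, Fin σ}
    (hp : p.1.val < L.length) : childOf (L ++ L') p = childOf L p := by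
  rw [childOf, List.getD_append _ _ _ _ hp, childOf]

theorem childOf_injOn (hL : L.Nodup) :
    Set.InjOn (childOf (n := n) L) {p | p.1.val < L.length} := by
  intro p hp q hq hpq
  obtain ⟨h1, h2⟩ := List.append_inj' hpq rfl
  rw [List.getD_eq_getElem _ _ hp, List.getD_eq_getElem _ _ hq, hL.getElem_inj_iff] at h1
  exact Sigma.ext (Fin.ext h1) (heq_of_eq (List.singleton_inj.1 h2))

/-- The first `L.length` nodes of the greedy decoding of `w`; the last field is what makes the
least candidate the next node in lexicographic order. -/
structure IsPartialDecoding (w : Fin n → Finset (Fin σ)) (L : List (List (Fin σ))) : Prop where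
  sortedLT : L.SortedLT
  getD_zero : L.getD 0 [] = []
  exists_childOf : ∀ l, 0 < l → l < L.length → ∃ p ∈ childPairs w l, childOf L p = L.getD l []
  lt_of_mem_candidates : ∀ u ∈ candidates w L, ∀ v ∈ L, v < u

theorem isPartialDecoding_singleton : IsPartialDecoding w [[]] where
  sortedLT := List.sortedLT_iff_pairwise.2 (List.pairwise_singleton _ _)
  getD_zero := rfl
  exists_childOf l hl hl1 := absurd hl1 (by simp; omega)
  lt_of_mem_candidates u hu v hv := by
    obtain ⟨p, -, rfl⟩ := mem_image.1 (mem_sdiff.1 hu).1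
    rw [List.mem_singleton.1 hv]
    exact nil_lt_append_singleton _ _

theorem IsPartialDecoding.nil_mem (hL : IsPartialDecoding w L) (hL0 : 0 < L.length) :
    [] ∈ L := by
  rw [← hL.getD_zero, List.getD_eq_getElem _ _ hL0]
  exact List.getElem_mem _

theorem IsPartialDecoding.candidates_nonempty (hL : IsPartialDecoding w L) (hw : IsDominating w)
    (hL0 : 0 < L.length) (hLn : L.length < n) : (candidates w L).Nonempty := by
  set I := (childPairs w L.length).image (childOf L)
  have hI : L.length ≤ #I := by
    rw [card_image_of_injOn fun p hp q hq => childOf_injOn hL.sortedLT.nodup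
      (mem_childPairs.1 hp).1 (mem_childPairs.1 hq).1, card_childPairs]
    exact hw _ hLn
  have hnil : [] ∈ L.toFinset := List.mem_toFinset.2 (hL.nil_mem hL0)
  -- candidates are nonempty strings, so at most `L.length - 1` of them are already in `L`
  have hinter : #(I ∩ L.toFinset) ≤ L.length - 1 := by
    calc #(I ∩ L.toFinset) ≤ #(L.toFinset.erase []) := card_le_card fun u hu => by
          obtain ⟨p, -, rfl⟩ := mem_image.1 (mem_inter.1 hu).1
          exact mem_erase.2 ⟨by simp [childOf], (mem_inter.1 hu).2⟩
      _ = L.length - 1 := by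
          rw [card_erase_of_mem hnil, List.toFinset_card_of_nodup hL.sortedLT.nodup]
  have := card_sdiff_add_card_inter I L.toFinset
  exact card_pos.1 (show 0 < #(I \ L.toFinset) by omega)

theorem min'_lt_of_mem_candidates_concat (hne : (candidates w L).Nonempty) {u' : List (Fin σ)}
    (hu' : u' ∈ candidates w (L ++ [(candidates w L).min' hne])) :
    (candidates w L).min' hne < u' := by
  set u := (candidates w L).min' hne
  obtain ⟨⟨q, hq, rfl⟩, hu'L⟩ := mem_candidates.1 hu'
  obtain ⟨hqL, hqw⟩ := mem_childPairs.1 hq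
  rw [List.length_append, List.length_singleton] at hqL
  rcases Nat.lt_succ_iff_lt_or_eq.1 hqL with hqL | hqL
  · rw [childOf_append hqL] at hu'L ⊢
    have hq_cand : childOf L q ∈ candidates w L :=
      mem_candidates.2 ⟨⟨q, mem_childPairs.2 ⟨hqL, hqw⟩, rfl⟩,
        fun h => hu'L (List.mem_append_left _ h)⟩
    exact lt_of_le_of_ne (min'_le _ _ hq_cand) fun h => hu'L (h ▸ by simp)
  · rw [childOf, List.getD_append_right _ _ _ _ hqL.ge, hqL, Nat.sub_self]
    exact lt_append_singleton _ _

theorem IsPartialDecoding.concat_min (hL : IsPartialDecoding w L)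
    (hne : (candidates w L).Nonempty) :
    IsPartialDecoding w (L ++ [(candidates w L).min' hne]) := by
  set u := (candidates w L).min' hne
  have hu : u ∈ candidates w L := min'_mem _ _
  obtain ⟨⟨p, hp, hpu⟩, huL⟩ := mem_candidates.1 hu
  have hpL := (mem_childPairs.1 hp).1
  have hvu : ∀ v ∈ L, v < u := hL.lt_of_mem_candidates u hu
  refine ⟨?_, ?_, fun l hl0 hl => ?_, fun u' hu' v hv => ?_⟩
  · refine List.sortedLT_iff_pairwise.2 (List.pairwise_append.2 ⟨hL.sortedLT.pairwise,
      List.pairwise_singleton _ _, fun a ha b hb => ?_⟩)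
    exact List.mem_singleton.1 hb ▸ hvu a ha
  · rw [List.getD_append _ _ _ _ (by omega), hL.getD_zero]
  · rw [List.length_append, List.length_singleton] at hl
    rcases Nat.lt_succ_iff_lt_or_eq.1 hl with hl | rfl
    · obtain ⟨q, hq, hqL⟩ := hL.exists_childOf l hl0 hl
      refine ⟨q, hq, ?_⟩
      rw [childOf_append ((mem_childPairs.1 hq).1.trans hl), hqL, List.getD_append _ _ _ _ hl]
    · refine ⟨p, hp, ?_⟩
      rw [childOf_append hpL, hpu, List.getD_append_right _ _ _ _ le_rfl]
      simp
  · have hu_lt := min'_lt_of_mem_candidates_concat hne hu'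
    rcases List.mem_append.1 hv with hv | hv
    · exact (hvu v hv).trans hu_lt
    · rwa [List.mem_singleton.1 hv]

theorem exists_isPartialDecoding (hw : IsDominating w) (hn : 0 < n) :
    ∃ L, L.length = n ∧ IsPartialDecoding w L := by
  suffices ∀ k, 1 ≤ k → k ≤ n → ∃ L, L.length = k ∧ IsPartialDecoding w L from this n hn le_rfl
  intro k hk
  induction k, hk using Nat.le_induction with
  | base => exact fun _ => ⟨[[]], rfl, isPartialDecoding_singleton⟩
  | succ k hk ih =>
    intro hkn
    obtain ⟨L, rfl, hL⟩ := ih (by omega)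
    have hne := hL.candidates_nonempty hw (by omega) hkn
    exact ⟨_, by simp, hL.concat_min hne⟩

theorem IsPartialDecoding.image_childOf_eq (hL : IsPartialDecoding w L) (hlen : L.length = n)
    (hsum : ∑ j, #(w j) + 1 = n) : (childPairs w n).image (childOf L) = L.toFinset.erase [] := by
  symm
  refine eq_of_subset_of_card_le (fun v hv => ?_) ?_
  · obtain ⟨hv0, hvL⟩ := mem_erase.1 hv
    obtain ⟨l, hl, rfl⟩ := List.mem_iff_getElem.1 (List.mem_toFinset.1 hvL)
    have hl0 : 0 < l := Nat.pos_of_ne_zero fun h => hv0 (by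
      subst h; rw [← List.getD_eq_getElem _ []]; exact hL.getD_zero)
    obtain ⟨p, hp, hpl⟩ := hL.exists_childOf l hl0 hl
    obtain ⟨hpl', hpw⟩ := mem_childPairs.1 hp
    refine mem_image.2 ⟨p, mem_childPairs.2 ⟨by omega, hpw⟩, ?_⟩
    rw [hpl, List.getD_eq_getElem _ _ hl]
  · rw [card_image_of_injOn fun p _ q _ => childOf_injOn hL.sortedLT.nodup (by simp [hlen])
      (by simp [hlen]), card_childPairs, card_erase_of_mem (List.mem_toFinset.2 (hL.nil_mem
      (by omega))), List.toFinset_card_of_nodup hL.sortedLT.nodup, hlen, filter_true_of_mem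
      fun m _ => m.isLt]
    omega

theorem exists_mem_tries_childWord_eq {nd : Fin σ → ℕ} (hw : HasLetterCounts nd w)
    (hdom : IsDominating w) (hsum : ∑ i, nd i + 1 = n) : ∃ S ∈ tries n nd, childWord n S = w := by
  obtain ⟨L, hlen, hL⟩ := exists_isPartialDecoding hdom (by omega)
  have himage := hL.image_childOf_eq hlen (by rwa [sum_card_eq_of_hasLetterCounts hw])
  have mem_image_iff {s : List (Fin σ)} {c : Fin σ} :
      s ++ [c] ∈ L.toFinset ↔ ∃ p ∈ childPairs w n, childOf L p = s ++ [c] := by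
    rw [← mem_image, himage, mem_erase, and_iff_right (by simp)]
  have hcard : #L.toFinset = n := by rw [List.toFinset_card_of_nodup hL.sortedLT.nodup, hlen]
  have hcl : IsPrefixClosed L.toFinset := fun s c hsc => by
    obtain ⟨p, hp, hps⟩ := mem_image_iff.1 hsc
    rw [← (List.append_inj' hps rfl).1, List.getD_eq_getElem _ _ (by omega), List.mem_toFinset]
    exact List.getElem_mem _
  have hword : childWord n L.toFinset = w := by
    funext j
    ext c
    rw [mem_childWord, node_toFinset hL.sortedLT, mem_image_iff]
    constructor
    · rintro ⟨p, hp, hpj⟩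
      obtain ⟨hp1, hp2⟩ := List.append_inj' hpj rfl
      rw [List.getD_eq_getElem _ _ (by omega), List.getD_eq_getElem _ _ (by omega),
        hL.sortedLT.nodup.getElem_inj_iff] at hp1
      obtain rfl : p.1 = j := Fin.ext hp1
      exact List.singleton_inj.1 hp2 ▸ (mem_childPairs.1 hp).2
    · exact fun hc => ⟨⟨j, c⟩, mem_childPairs.2 ⟨j.isLt, hc⟩, rfl⟩
  refine ⟨L.toFinset, ⟨hcard, List.mem_toFinset.2 (hL.nil_mem (by omega)), hcl, fun i => ?_⟩,
    hword⟩
  rw [← card_filter_mem_childWord hcl hcard, hword, hw i]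

end Decoding

theorem bijOn_childWord {nd : Fin σ → ℕ} (hsum : ∑ i, nd i + 1 = n) :
    Set.BijOn (childWord n) (tries n nd) {w | HasLetterCounts nd w ∧ IsDominating w} :=
  ⟨fun _ ⟨hS, hnil, hcl, hcount⟩ => ⟨fun i => (card_filter_mem_childWord hcl hS i).trans
      (hcount i), isDominating_childWord hnil hcl hS⟩,
    fun _ ⟨hSn, hSnil, hScl, _⟩ _ ⟨hTn, hTnil, hTcl, _⟩ h =>
      eq_of_childWord_eq hSn hSnil hScl hTn hTnil hTcl h,
    fun _ ⟨hw, hdom⟩ => exists_mem_tries_childWord_eq hw hdom hsum⟩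

theorem ncard_tries {nd : Fin σ → ℕ} (hsum : ∑ i, nd i + 1 = n) :
    n * (tries n nd).ncard = ∏ i, n.choose (nd i) := by
  rw [(bijOn_childWord hsum).ncard_eq, ← ncard_setOf_hasLetterCounts_eq_mul hsum,
    ncard_setOf_hasLetterCounts]

end TrieCount

/-- A trie over the alphabet `Fin σ` is a finite set of strings containing the
empty string and closed under prefixes.  Its nodes are its elements; the symbol
distribution counts, for each character, the nonempty strings ending with it. -/
theorem stmt0 (σ n : ℕ) (hn : 1 ≤ n) (nd : Fin σ → ℕ)
    (hsum : ∑ i, nd i = n - 1) :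
    n * Set.ncard {S : Finset (List (Fin σ)) |
        S.card = n ∧ ([] : List (Fin σ)) ∈ S ∧
        (∀ (s : List (Fin σ)) (c : Fin σ), s ++ [c] ∈ S → s ∈ S) ∧
        (∀ i : Fin σ, (S.filter (fun s => s.getLast? = some i)).card = nd i)} =
      ∏ i, Nat.choose n (nd i) :=
  TrieCount.ncard_tries (by omega)
end

section
/- Let n ≥ 1 and let n_1, …, n_σ be nonnegative integers with n_1 + … + n_σ = n − 1. The number of σ×n matrices M with entries in {0,1} such that row i contains exactly n_i ones and such that the associated sequence L (defined by L[j] = ∑_{t=1}^{j} ((number of ones in column t of M) − 1)) is a Łukasiewicz path equals (1/n) · ∏_{i=1}^{σ} C(n, n_i). -/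
/-- Number of ones in column `t` of the boolean matrix `M`. -/
def colOnes (σ n : ℕ) (M : Fin σ → Fin n → Bool) (t : Fin n) : ℕ :=
  (Finset.univ.filter fun i => M i t = true).card

/-- The sequence `L` associated with a matrix: `L j = ∑_{t=1}^{j} (colOnes t − 1)`
(here columns are 0-indexed, and `j` ranges over `0,…,n`). -/
def Lseq (σ n : ℕ) (M : Fin σ → Fin n → Bool) (j : ℕ) : ℤ :=
  ∑ t ∈ Finset.univ.filter (fun t : Fin n => (t : ℕ) < j),
    ((colOnes σ n M t : ℤ) - 1)

/-- `L[1..n]` (with `L 0 = 0` prepended for convenience) is a Łukasiewicz path: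
`L n = −1`, `L j ≥ 0` for `1 ≤ j ≤ n−1`, and consecutive differences are `≥ −1`. -/
def IsLukasiewicz (n : ℕ) (L : ℕ → ℤ) : Prop :=
  L n = -1 ∧ (∀ j, 1 ≤ j → j ≤ n - 1 → 0 ≤ L j) ∧
    (∀ j, 1 ≤ j → j ≤ n - 1 → -1 ≤ L (j + 1) - L j)

/-!
The cycle lemma. Rotating the columns preserves the row counts, and over a full turn the column
excesses `colOnes - 1` add up to `-1`. So their cyclically continued partial sums `S` satisfy
`S (k + n) = S k - 1`, and the rotation starting at column `r` gives a Łukasiewicz path iff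
`S r ≤ S k` for `r < k < r + n`. Exactly one `r < n` qualifies (the first minimum of `S` on
`[0, n)`), so rotation is a bijection from `Fin n × {Łukasiewicz matrices}` onto the
`∏ C(n, nᵢ)` matrices with the prescribed row counts.
-/

open Finset

section RowCounts

variable {ι κ : Type*} [Fintype κ]

def HasRowCounts (nd : ι → ℕ) (M : ι → κ → Bool) : Prop :=
  ∀ i, #(univ.filter fun j => M i j = true) = nd i

def boolFunEquivFinset (κ : Type*) [Fintype κ] [DecidableEq κ] : (κ → Bool) ≃ Finset κ where
  toFun f := univ.filter fun j => f j = true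
  invFun s j := decide (j ∈ s)
  left_inv f := by funext j; simp
  right_inv s := by ext j; simp

theorem card_hasRowCounts [Fintype ι] [DecidableEq κ] (nd : ι → ℕ) :
    Nat.card {M : ι → κ → Bool // HasRowCounts nd M} =
      ∏ i, (Fintype.card κ).choose (nd i) := by
  unfold HasRowCounts
  rw [Nat.card_congr (Equiv.subtypePiEquivPi (p := fun i (f : κ → Bool) =>
    #(univ.filter fun j => f j = true) = nd i)), Nat.card_pi]
  refine prod_congr rfl fun i _ => ?_
  refine (Nat.card_congr ((boolFunEquivFinset κ).subtypeEquiv (q := fun s => #s = nd i)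
    fun f => Iff.rfl)).trans ?_
  rw [Nat.card_eq_fintype_card, Fintype.card_finset_len]

end RowCounts

section Shift

variable {ι : Type*} {n : ℕ}

def shiftCols (r : Fin n) (M : ι → Fin n → Bool) : ι → Fin n → Bool :=
  fun i j => M i (j + r)

theorem shiftCols_shiftCols (a b : Fin n) (M : ι → Fin n → Bool) :
    shiftCols a (shiftCols b M) = shiftCols (a + b) M := by
  funext i j
  simp only [shiftCols, add_assoc]

theorem shiftCols_zero [NeZero n] (M : ι → Fin n → Bool) : shiftCols 0 M = M := by
  funext i j
  simp only [shiftCols, add_zero]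

theorem hasRowCounts_shiftCols_iff [NeZero n] (r : Fin n) (nd : ι → ℕ) (M : ι → Fin n → Bool) :
    HasRowCounts nd (shiftCols r M) ↔ HasRowCounts nd M := by
  refine forall_congr' fun i => ?_
  rw [card_filter, card_filter,
    Fintype.sum_equiv (Equiv.addRight r) (fun j => if shiftCols r M i j = true then 1 else 0)
      (fun j => if M i j = true then 1 else 0) fun _ => rfl]

end Shift

theorem sum_filter_val_lt_eq_sum_range {β : Type*} [AddCommMonoid β] {n j : ℕ} (hj : j ≤ n)
    (f : ℕ → β) : ∑ t ∈ univ.filter (fun t : Fin n => (t : ℕ) < j), f t = ∑ t ∈ range j, f t := by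
  refine sum_bij (fun t _ => t.val) (fun t ht => by simpa using ht)
    (fun a _ b _ h => Fin.ext h) (fun b hb => ?_) fun _ _ => rfl
  have hb : b < j := mem_range.mp hb
  exact ⟨⟨b, by omega⟩, by simpa using hb, rfl⟩

theorem exists_unique_cycle_rotation {n : ℕ} [NeZero n] (S : ℕ → ℤ)
    (hS : ∀ k, S (k + n) = S k - 1) :
    ∃! r : Fin n, ∀ k, (r : ℕ) < k → k < r + n → S r ≤ S k := by
  classical
  have hmin : ∃ r, r < n ∧ ∀ k < n, S r ≤ S k := by
    obtain ⟨r, hr, h⟩ := (range n).exists_min_image S (nonempty_range_iff.mpr (NeZero.ne n))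
    exact ⟨r, mem_range.mp hr, fun k hk => h k (mem_range.mpr hk)⟩
  obtain ⟨hr₀n, hr₀min⟩ := Nat.find_spec hmin
  -- The good rotation starts at the first minimum of `S` on `[0, n)`.
  have hfirst : ∀ k < Nat.find hmin, S (Nat.find hmin) < S k := by
    intro k hk
    have := Nat.find_min hmin hk
    push Not at this
    obtain ⟨j, hj, hjk⟩ := this (hk.trans hr₀n)
    exact (hr₀min j hj).trans_lt hjk
  have not_two_good : ∀ a b : ℕ, a < b → b < n →
      (∀ k, a < k → k < a + n → S a ≤ S k) → (∀ k, b < k → k < b + n → S b ≤ S k) → False := by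
    intro a b hab hbn ha hb
    have h₁ := ha b hab (by omega)
    have h₂ := hb (a + n) (by omega) (by omega)
    rw [hS] at h₂
    omega
  have hgood : ∀ k, Nat.find hmin < k → k < Nat.find hmin + n → S (Nat.find hmin) ≤ S k := by
    intro k hrk hkr
    rcases lt_or_ge k n with hkn | hkn
    · exact hr₀min k hkn
    · obtain ⟨k', rfl⟩ := Nat.exists_eq_add_of_le' hkn
      rw [hS]
      linarith [hfirst k' (Nat.lt_of_add_lt_add_right hkr)]
  refine ⟨⟨Nat.find hmin, hr₀n⟩, hgood, fun r hr => Fin.ext ?_⟩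
  rcases lt_trichotomy (r : ℕ) (Nat.find hmin) with h | h | h
  · exact (not_two_good _ _ h hr₀n hr hgood).elim
  · exact h
  · exact (not_two_good _ _ h r.isLt hgood hr).elim

theorem sum_colOnes {σ n : ℕ} (M : Fin σ → Fin n → Bool) :
    ∑ t, colOnes σ n M t = ∑ i, #(univ.filter fun j => M i j = true) := by
  simp only [colOnes, card_filter]
  exact sum_comm

section Lukasiewicz

variable {σ n : ℕ} [NeZero n]

/-- `Lseq` continued past column `n` by reading the columns cyclically. -/
def LseqExt (M : Fin σ → Fin n → Bool) (k : ℕ) : ℤ :=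
  ∑ t ∈ range k, ((colOnes σ n M (Fin.ofNat n t) : ℤ) - 1)

theorem Lseq_shiftCols (M : Fin σ → Fin n → Bool) (r : Fin n) {j : ℕ} (hj : j ≤ n) :
    Lseq σ n (shiftCols r M) j = LseqExt M (r + j) - LseqExt M r := by
  have hcol : ∀ t : Fin n,
      colOnes σ n (shiftCols r M) t = colOnes σ n M (Fin.ofNat n (r + t)) := by
    intro t
    have : t + r = Fin.ofNat n (r + t) := by
      ext
      simp [Fin.val_add, add_comm]
    exact congrArg (colOnes σ n M) this
  simp only [Lseq, hcol]
  rw [sum_filter_val_lt_eq_sum_range hj (fun u => (colOnes σ n M (Fin.ofNat n (r + u)) : ℤ) - 1),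
    LseqExt, LseqExt, sum_range_add]
  ring

variable {nd : Fin σ → ℕ}

theorem LseqExt_period (M : Fin σ → Fin n → Bool) (hM : HasRowCounts nd M)
    (hsum : ∑ i, nd i = n - 1) : LseqExt M n = -1 := by
  have hcols : ∑ t, (colOnes σ n M t : ℤ) = n - 1 := by
    rw [← Nat.cast_sum, sum_colOnes, Fintype.sum_congr _ _ hM, hsum]
    have := NeZero.pos n
    omega
  rw [LseqExt, ← Fin.sum_univ_eq_sum_range, sum_sub_distrib]
  simp [hcols]

theorem LseqExt_add_period (M : Fin σ → Fin n → Bool) (hM : HasRowCounts nd M)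
    (hsum : ∑ i, nd i = n - 1) (k : ℕ) : LseqExt M (k + n) = LseqExt M k - 1 := by
  have hshift : ∀ t, Fin.ofNat n (n + t) = Fin.ofNat n t := fun t => by ext; simp
  rw [add_comm, LseqExt, sum_range_add, ← LseqExt, LseqExt_period M hM hsum]
  simp only [hshift]
  rw [← LseqExt]
  ring

theorem isLukasiewicz_Lseq_shiftCols_iff (M : Fin σ → Fin n → Bool) (hM : HasRowCounts nd M)
    (hsum : ∑ i, nd i = n - 1) (r : Fin n) :
    IsLukasiewicz n (Lseq σ n (shiftCols r M)) ↔
      ∀ k, (r : ℕ) < k → k < r + n → LseqExt M r ≤ LseqExt M k := by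
  have hstep : ∀ k, LseqExt M k - 1 ≤ LseqExt M (k + 1) := by
    intro k
    rw [LseqExt, LseqExt, sum_range_succ]
    linarith [Int.natCast_nonneg (colOnes σ n M (Fin.ofNat n k))]
  constructor
  · rintro ⟨-, hpos, -⟩ k hrk hkr
    have := hpos (k - r) (by omega) (by omega)
    rw [Lseq_shiftCols M r (by omega), Nat.add_sub_cancel' hrk.le] at this
    linarith
  · intro h
    refine ⟨?_, fun j hj₁ hjn => ?_, fun j hj₁ hjn => ?_⟩
    · rw [Lseq_shiftCols M r le_rfl, LseqExt_add_period M hM hsum]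
      ring
    · rw [Lseq_shiftCols M r (by omega)]
      linarith [h (r + j) (by omega) (by omega)]
    · rw [Lseq_shiftCols M r (by omega), Lseq_shiftCols M r (by omega), ← add_assoc]
      linarith [hstep (r + j)]

theorem existsUnique_isLukasiewicz_Lseq_shiftCols (M : Fin σ → Fin n → Bool)
    (hM : HasRowCounts nd M) (hsum : ∑ i, nd i = n - 1) :
    ∃! r : Fin n, IsLukasiewicz n (Lseq σ n (shiftCols r M)) :=
  (existsUnique_congr (isLukasiewicz_Lseq_shiftCols_iff M hM hsum)).2
    (exists_unique_cycle_rotation _ (LseqExt_add_period M hM hsum))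

end Lukasiewicz

theorem card_prod_lukasiewicz_eq_card_hasRowCounts {σ n : ℕ} [NeZero n] {nd : Fin σ → ℕ}
    (hsum : ∑ i, nd i = n - 1) :
    Nat.card (Fin n × {M : Fin σ → Fin n → Bool //
        HasRowCounts nd M ∧ IsLukasiewicz n (Lseq σ n M)}) =
      Nat.card {M : Fin σ → Fin n → Bool // HasRowCounts nd M} := by
  refine Nat.card_eq_of_bijective
    (fun p => ⟨shiftCols p.1 p.2.1, (hasRowCounts_shiftCols_iff _ _ _).2 p.2.2.1⟩) ⟨?_, ?_⟩
  · rintro ⟨r, M, hM, hML⟩ ⟨r', M', _, hML'⟩ h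
    have hM' : shiftCols (-r' + r) M = M' := by
      simpa [shiftCols_shiftCols, shiftCols_zero] using congrArg (fun p => shiftCols (-r') p.1) h
    have hr : -r' + r = 0 := (existsUnique_isLukasiewicz_Lseq_shiftCols M hM hsum).unique
      (hM' ▸ hML') (by rwa [shiftCols_zero])
    obtain rfl : r' = r := neg_add_eq_zero.mp hr
    rw [hr, shiftCols_zero] at hM'
    subst hM'
    rfl
  · rintro ⟨M, hM⟩
    obtain ⟨r, hr, -⟩ := existsUnique_isLukasiewicz_Lseq_shiftCols M hM hsum
    refine ⟨(-r, ⟨shiftCols r M, (hasRowCounts_shiftCols_iff _ _ _).2 hM, hr⟩), ?_⟩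
    simp [shiftCols_shiftCols, shiftCols_zero]

/-- The number of `σ × n` binary matrices whose `i`-th row contains exactly `nd i`
ones and whose associated sequence `L` is a Łukasiewicz path equals
`(1/n) ∏ᵢ C(n, nd i)`. -/
theorem stmt1 (σ n : ℕ) (hn : 1 ≤ n) (nd : Fin σ → ℕ)
    (hsum : ∑ i, nd i = n - 1) :
    n * Set.ncard {M : Fin σ → Fin n → Bool |
        (∀ i, (Finset.univ.filter fun j => M i j = true).card = nd i) ∧
        IsLukasiewicz n (Lseq σ n M)} =
      ∏ i, Nat.choose n (nd i) := by
  have : NeZero n := ⟨by omega⟩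
  calc n * Set.ncard _ = Nat.card (Fin n × {M : Fin σ → Fin n → Bool //
        HasRowCounts nd M ∧ IsLukasiewicz n (Lseq σ n M)}) := by
        rw [Nat.card_prod, Nat.card_eq_fintype_card, Fintype.card_fin, ← Nat.card_coe_set_eq]
        rfl
    _ = Nat.card {M : Fin σ → Fin n → Bool // HasRowCounts nd M} :=
        card_prod_lukasiewicz_eq_card_hasRowCounts hsum
    _ = ∏ i, n.choose (nd i) := by rw [card_hasRowCounts, Fintype.card_fin]
end

section
/- For every trie S over an alphabet Σ and every integer k ≥ 0, it holds that H_{k+1}(S) ≤ H_k(S). -/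
/-- The `k`-th order context `λ_k(s)` of a node `s`: the last `k` symbols of
`s`, left-padded with the extra symbol `#` (modeled as `none`) when `|s| < k`.
It is represented as a function `Fin k → Option (Fin σ)`. -/
def context (σ k : ℕ) (s : List (Fin σ)) : Fin k → Option (Fin σ) :=
  fun i =>
    (List.replicate (k - s.length) (none : Option (Fin σ)) ++
      (s.drop (s.length - k)).map some).getD (i : ℕ) none

/-- The `k`-th order empirical entropy of a trie `S` with `n` nodes:
`H_k(S) = (1/n) ∑_{w} ∑_{c} n_{w,c}·log₂(n_w/n_{w,c}) + (n_w − n_{w,c})·log₂(n_w/(n_w − n_{w,c}))`,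
where `n_w` counts nodes with context `w` and `n_{w,c}` those among them with an
outgoing edge labeled `c` (conventions `0·log₂(x/0) = 0` hold automatically). -/
noncomputable def trieHk (σ : ℕ) (S : Finset (List (Fin σ))) (k : ℕ) : ℝ :=
  (1 / (S.card : ℝ)) *
    ∑ w : Fin k → Option (Fin σ), ∑ c : Fin σ,
      (((S.filter fun s => context σ k s = w ∧ s ++ [c] ∈ S).card : ℝ) *
          Real.logb 2 (((S.filter fun s => context σ k s = w).card : ℝ) /
            ((S.filter fun s => context σ k s = w ∧ s ++ [c] ∈ S).card : ℝ)) +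
        (((S.filter fun s => context σ k s = w).card : ℝ) -
            ((S.filter fun s => context σ k s = w ∧ s ++ [c] ∈ S).card : ℝ)) *
          Real.logb 2 (((S.filter fun s => context σ k s = w).card : ℝ) /
            (((S.filter fun s => context σ k s = w).card : ℝ) -
              ((S.filter fun s => context σ k s = w ∧ s ++ [c] ∈ S).card : ℝ))))

/-! Grouping the `(k+1)`-contexts by their last `k` symbols splits every count `n_w`, `n_{w,c}`
into the counts of the finer contexts, and `(a, b) ↦ b · H(a / b)` (with `H` the binary entropy)
is superadditive by the log-sum inequality: conditioning on one more symbol cannot increase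
the entropy. -/

open Real Finset

lemma Real.mul_log_div_le {a b r : ℝ} (ha : 0 ≤ a) (hab : a ≤ b) (hr : 0 < r) :
    a * log (b / a) ≤ a * log r + b / r - a := by
  rcases ha.eq_or_lt with rfl | ha
  · simp only [zero_mul, zero_add, sub_zero]
    exact div_nonneg (by linarith) hr.le
  have hb : 0 < b := ha.trans_le hab
  have hlog : log (b / a) = log (b / (a * r)) + log r := by
    rw [← log_mul (by positivity) hr.ne']
    field_simp
  calc a * log (b / a) = a * log (b / (a * r)) + a * log r := by rw [hlog, mul_add]
    _ ≤ a * (b / (a * r) - 1) + a * log r := by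
      gcongr
      exact log_le_sub_one_of_pos (by positivity)
    _ = a * log r + b / r - a := by field_simp; ring

/-- The log-sum inequality. -/
theorem Real.sum_mul_log_div_le {ι : Type*} (s : Finset ι) (a b : ι → ℝ)
    (ha : ∀ i ∈ s, 0 ≤ a i) (hab : ∀ i ∈ s, a i ≤ b i) :
    ∑ i ∈ s, a i * log (b i / a i) ≤ (∑ i ∈ s, a i) * log ((∑ i ∈ s, b i) / ∑ i ∈ s, a i) := by
  set A := ∑ i ∈ s, a i
  set B := ∑ i ∈ s, b i
  rcases (sum_nonneg ha).eq_or_lt with hA | hA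
  · have hzero : ∀ i ∈ s, a i = 0 := (sum_eq_zero_iff_of_nonneg ha).1 hA.symm
    rw [show A = 0 from hA.symm, zero_mul]
    exact (sum_eq_zero fun i hi => by rw [hzero i hi, zero_mul]).le
  have hB : 0 < B := hA.trans_le (sum_le_sum hab)
  -- compare each term with the tangent line of `log` at the ratio `B / A`
  calc ∑ i ∈ s, a i * log (b i / a i)
      ≤ ∑ i ∈ s, (a i * log (B / A) + b i / (B / A) - a i) :=
        sum_le_sum fun i hi => mul_log_div_le (ha i hi) (hab i hi) (by positivity)
    _ = A * log (B / A) := by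
      rw [sum_sub_distrib, sum_add_distrib, ← sum_mul, ← sum_div]
      field_simp
      ring

/-- `b` times the binary entropy, in bits, of `a / b`; with `a = n_{w,c}` and `b = n_w` it is the
contribution of the pair `(w, c)` to `n · H_k(S)`. -/
noncomputable def binEntropyMass (a b : ℝ) : ℝ :=
  a * logb 2 (b / a) + (b - a) * logb 2 (b / (b - a))

lemma binEntropyMass_eq (a b : ℝ) :
    binEntropyMass a b = (a * log (b / a) + (b - a) * log (b / (b - a))) / log 2 := by
  simp only [binEntropyMass, logb]
  ring

theorem sum_binEntropyMass_le {ι : Type*} (s : Finset ι) (a b : ι → ℝ)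
    (ha : ∀ i ∈ s, 0 ≤ a i) (hab : ∀ i ∈ s, a i ≤ b i) :
    ∑ i ∈ s, binEntropyMass (a i) (b i) ≤ binEntropyMass (∑ i ∈ s, a i) (∑ i ∈ s, b i) := by
  simp only [binEntropyMass_eq, ← sum_div, sum_add_distrib]
  gcongr
  · exact sum_mul_log_div_le s a b ha hab
  · rw [← sum_sub_distrib]
    exact sum_mul_log_div_le s (fun i => b i - a i) b
      (fun i hi => sub_nonneg.2 (hab i hi)) (fun i hi => sub_le_self _ (ha i hi))

lemma Fin.tail_context (σ k : ℕ) (s : List (Fin σ)) :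
    Fin.tail (context σ (k + 1) s) = context σ k s := by
  funext i
  simp only [Fin.tail, context, Fin.val_succ]
  rcases le_or_gt s.length k with h | h
  · rw [show k + 1 - s.length = (k - s.length) + 1 by omega,
      Nat.sub_eq_zero_of_le (Nat.le_succ_of_le h), Nat.sub_eq_zero_of_le h,
      List.replicate_succ, List.cons_append, List.getD_cons_succ]
  · rw [show k + 1 - s.length = 0 by omega, show k - s.length = 0 by omega,
      List.replicate_zero, List.nil_append, List.nil_append,
      List.drop_eq_getElem_cons (show s.length - (k + 1) < s.length by omega),
      show s.length - (k + 1) + 1 = s.length - k by omega, List.map_cons, List.getD_cons_succ]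

def contextCount (σ k : ℕ) (T : Finset (List (Fin σ))) (w : Fin k → Option (Fin σ)) : ℕ :=
  #{s ∈ T | context σ k s = w}

lemma contextCount_mono {σ k : ℕ} {T T' : Finset (List (Fin σ))} (h : T ⊆ T')
    (w : Fin k → Option (Fin σ)) : contextCount σ k T w ≤ contextCount σ k T' w :=
  card_le_card (filter_subset_filter _ h)

lemma contextCount_eq_sum_succ (σ k : ℕ) (T : Finset (List (Fin σ)))
    (w : Fin k → Option (Fin σ)) :
    contextCount σ k T w = ∑ w' with Fin.tail w' = w, contextCount σ (k + 1) T w' := by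
  simp only [contextCount]
  rw [sum_card_fiberwise_eq_card_filter]
  simp only [mem_filter, mem_univ, true_and, Fin.tail_context]

lemma trieHk_eq (σ : ℕ) (S : Finset (List (Fin σ))) (k : ℕ) :
    trieHk σ S k = 1 / #S * ∑ w, ∑ c : Fin σ,
      binEntropyMass (contextCount σ k {s ∈ S | s ++ [c] ∈ S} w) (contextCount σ k S w) := by
  simp only [trieHk, binEntropyMass, contextCount, filter_filter, and_comm]

theorem stmt6_general (σ : ℕ) (S : Finset (List (Fin σ))) (k : ℕ) :
    trieHk σ S (k + 1) ≤ trieHk σ S k := by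
  rw [trieHk_eq, trieHk_eq]
  gcongr 1 / _ * ?_
  rw [← sum_fiberwise univ Fin.tail]
  gcongr with w
  rw [sum_comm]
  gcongr with c
  simp only [contextCount_eq_sum_succ σ k _ w, Nat.cast_sum]
  exact sum_binEntropyMass_le _ _ _ (fun _ _ => Nat.cast_nonneg _)
    (fun w' _ => Nat.cast_le.2 (contextCount_mono (filter_subset _ _) w'))

/-- For every trie `S` and every `k ≥ 0`, `H_{k+1}(S) ≤ H_k(S)`. -/
theorem stmt6 (σ : ℕ) (S : Finset (List (Fin σ)))
    (hroot : ([] : List (Fin σ)) ∈ S)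
    (hpc : ∀ (s : List (Fin σ)) (c : Fin σ), s ++ [c] ∈ S → s ∈ S) (k : ℕ) :
    trieHk σ S (k + 1) ≤ trieHk σ S k :=
  stmt6_general σ S k
end

section
/- Let n ≥ 1 and let n_1, …, n_σ be nonnegative integers with n_1 + … + n_σ = n − 1. If n_i ≤ n/2 for every i ∈ [σ], then ∑_{i=1}^{σ} log₂ C(n, n_i) − log₂ n ≥ n − 1 − log₂ n; that is, the worst-case entropy H^wc of tries with this symbol distribution satisfies H^wc ≥ n − 1 − log₂ n. -/
/-! If `2 nᵢ ≤ n` then `C(n, nᵢ) ≥ C(2nᵢ, nᵢ) ≥ 2^nᵢ`, so `log₂ C(n, nᵢ) ≥ nᵢ`; summing over `i`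
gives `∑ᵢ log₂ C(n, nᵢ) ≥ n − 1`. -/

namespace Nat

theorem two_pow_le_centralBinom (r : ℕ) : 2 ^ r ≤ centralBinom r := by
  induction r with
  | zero => simp
  | succ r ih =>
    have hrec := succ_mul_centralBinom_succ r
    have hpos : 0 < r + 1 := r.succ_pos
    refine le_of_mul_le_mul_left ?_ hpos
    rw [hrec, pow_succ]
    nlinarith

theorem two_pow_le_choose_of_two_mul_le {r n : ℕ} (h : 2 * r ≤ n) : 2 ^ r ≤ n.choose r :=
  (two_pow_le_centralBinom r).trans <| by
    rw [centralBinom_eq_two_mul_choose]; exact choose_le_choose r h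

end Nat

theorem le_logb_two_choose_of_two_mul_le {r n : ℕ} (h : 2 * r ≤ n) :
    (r : ℝ) ≤ Real.logb 2 (n.choose r) := by
  have hpow : ((2 ^ r : ℕ) : ℝ) ≤ n.choose r := mod_cast Nat.two_pow_le_choose_of_two_mul_le h
  rw [Real.le_logb_iff_rpow_le one_lt_two (lt_of_lt_of_le (by positivity) hpow),
    Real.rpow_natCast]
  exact_mod_cast hpow

theorem stmt7_general (σ n : ℕ) (nd : Fin σ → ℕ)
    (hsum : ∑ i, nd i = n - 1) (hhalf : ∀ i, (nd i : ℝ) ≤ (n : ℝ) / 2) :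
    (n : ℝ) - 1 - Real.logb 2 n ≤
      (∑ i, Real.logb 2 (Nat.choose n (nd i))) - Real.logb 2 n := by
  have hterm (i : Fin σ) : (nd i : ℝ) ≤ Real.logb 2 (n.choose (nd i)) := by
    apply le_logb_two_choose_of_two_mul_le
    exact_mod_cast (by linarith [hhalf i] : (2 * nd i : ℝ) ≤ n)
  have htrunc : (n : ℝ) - 1 ≤ ((n - 1 : ℕ) : ℝ) := by
    rw [sub_le_iff_le_add]; exact_mod_cast (by omega : n ≤ n - 1 + 1)
  gcongr
  calc (n : ℝ) - 1 ≤ ((n - 1 : ℕ) : ℝ) := htrunc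
    _ = ∑ i, (nd i : ℝ) := by rw [← hsum, Nat.cast_sum]
    _ ≤ _ := Finset.sum_le_sum fun i _ => hterm i

/-- If `n_i ≤ n/2` for every `i`, the worst-case trie entropy
`H^wc = ∑ᵢ log₂ C(n, nᵢ) − log₂ n` satisfies `H^wc ≥ n − 1 − log₂ n`. -/
theorem stmt7 (σ n : ℕ) (hn : 1 ≤ n) (nd : Fin σ → ℕ)
    (hsum : ∑ i, nd i = n - 1) (hhalf : ∀ i, (nd i : ℝ) ≤ (n : ℝ) / 2) :
    (n : ℝ) - 1 - Real.logb 2 n ≤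
      (∑ i, Real.logb 2 (Nat.choose n (nd i))) - Real.logb 2 n :=
  stmt7_general σ n nd hsum hhalf
end

section
/- Let n ≥ 1 and let n_1, …, n_σ be nonnegative integers with n_1 + … + n_σ = n − 1. If n_j > n/2 for some j ∈ [σ], then such j is unique, and the worst-case entropy satisfies H^wc = ∑_{i∈[σ]\{j}} log₂ C(n, n_i) + log₂ C(n, n − n_j) − log₂ n ≥ n* − log₂ n, where n* = ∑_{i∈[σ]\{j}} n_i + (n − n_j). -/
/-!
Two entries `nᵢ, n_j` of the distribution already sum to at most `n - 1`, so once `n_j > n/2`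
every other `nᵢ` lies below `n/2`, which gives uniqueness of `j`. By the symmetry
`C(n, n_j) = C(n, n - n_j)` every binomial coefficient in `H^wc` then has its lower index `k`
at most `n/2`, and for such `k` we have `C(n, k) ≥ C(2k, k) ≥ 2^k`.
-/

open Finset

theorem Nat.two_pow_le_centralBinom_s8 (k : ℕ) : 2 ^ k ≤ k.centralBinom := by
  induction k with
  | zero => simp
  | succ k ih =>
    have hstep : (k + 1) * (k + 1).centralBinom = 2 * (2 * k + 1) * k.centralBinom :=
      Nat.succ_mul_centralBinom_succ k
    have hdouble : 2 * k.centralBinom ≤ (k + 1).centralBinom :=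
      Nat.le_of_mul_le_mul_left (by nlinarith) k.succ_pos
    calc 2 ^ (k + 1) = 2 * 2 ^ k := by ring
      _ ≤ 2 * k.centralBinom := by gcongr
      _ ≤ (k + 1).centralBinom := hdouble

theorem Nat.two_pow_le_choose_of_two_mul_le_s8 {n k : ℕ} (h : 2 * k ≤ n) : 2 ^ k ≤ n.choose k :=
  calc 2 ^ k ≤ k.centralBinom := Nat.two_pow_le_centralBinom_s8 k
    _ = (2 * k).choose k := Nat.centralBinom_eq_two_mul_choose k
    _ ≤ n.choose k := Nat.choose_le_choose k h

theorem le_logb_choose_of_two_mul_le {n k : ℕ} (h : 2 * k ≤ n) :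
    (k : ℝ) ≤ Real.logb 2 (n.choose k) := by
  have hpos : (0 : ℝ) < n.choose k := mod_cast Nat.choose_pos (by omega)
  rw [Real.le_logb_iff_rpow_le one_lt_two hpos, Real.rpow_natCast]
  exact_mod_cast Nat.two_pow_le_choose_of_two_mul_le_s8 h

theorem two_mul_lt_of_lt_two_mul_of_ne {ι : Type*} [Fintype ι] {f : ι → ℕ} {n : ℕ}
    (hsum : ∑ i, f i ≤ n) {i j : ι} (hij : i ≠ j) (hj : n < 2 * f j) : 2 * f i < n := by
  have hpair : f i + f j ≤ ∑ k, f k :=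
    add_le_sum (fun _ _ ↦ Nat.zero_le _) (mem_univ i) (mem_univ j) hij
  omega

theorem eq_of_lt_two_mul {ι : Type*} [Fintype ι] {f : ι → ℕ} {n : ℕ}
    (hsum : ∑ i, f i ≤ n) {i j : ι} (hi : n < 2 * f i) (hj : n < 2 * f j) : i = j := by
  by_contra hij
  exact (two_mul_lt_of_lt_two_mul_of_ne hsum hij hj).not_gt hi

theorem stmt8_general (σ n : ℕ) (nd : Fin σ → ℕ)
    (hsum : ∑ i, nd i = n - 1) (j : Fin σ) (hj : (n : ℝ) / 2 < (nd j : ℝ)) :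
    (∀ j' : Fin σ, (n : ℝ) / 2 < (nd j' : ℝ) → j' = j) ∧
    ((∑ i, Real.logb 2 (Nat.choose n (nd i))) - Real.logb 2 n =
      (∑ i ∈ Finset.univ.erase j, Real.logb 2 (Nat.choose n (nd i))) +
        Real.logb 2 (Nat.choose n (n - nd j)) - Real.logb 2 n) ∧
    ((∑ i ∈ Finset.univ.erase j, (nd i : ℝ)) + ((n : ℝ) - (nd j : ℝ)) -
        Real.logb 2 n ≤
      (∑ i, Real.logb 2 (Nat.choose n (nd i))) - Real.logb 2 n) := by
  have hsum_le : ∑ i, nd i ≤ n := hsum.le.trans (Nat.sub_le n 1)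
  have half_lt {i : Fin σ} (h : (n : ℝ) / 2 < nd i) : n < 2 * nd i := by
    exact_mod_cast (div_lt_iff₀' two_pos).1 h
  have hjn : nd j ≤ n := (single_le_sum (fun _ _ ↦ Nat.zero_le _) (mem_univ j)).trans hsum_le
  have hsplit : ∑ i, Real.logb 2 (n.choose (nd i)) =
      ∑ i ∈ univ.erase j, Real.logb 2 (n.choose (nd i)) + Real.logb 2 (n.choose (n - nd j)) := by
    rw [Nat.choose_symm hjn, sum_erase_add _ _ (mem_univ j)]
  refine ⟨fun j' hj' ↦ eq_of_lt_two_mul hsum_le (half_lt hj') (half_lt hj), by rw [hsplit], ?_⟩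
  have hrest :
      ∑ i ∈ univ.erase j, (nd i : ℝ) ≤ ∑ i ∈ univ.erase j, Real.logb 2 (n.choose (nd i)) :=
    sum_le_sum fun i hi ↦ le_logb_choose_of_two_mul_le
      (two_mul_lt_of_lt_two_mul_of_ne hsum_le (ne_of_mem_erase hi) (half_lt hj)).le
  have hcomplement : ((n - nd j : ℕ) : ℝ) ≤ Real.logb 2 (n.choose (n - nd j)) :=
    le_logb_choose_of_two_mul_le (by have := half_lt hj; omega)
  rw [Nat.cast_sub hjn] at hcomplement
  linarith

/-- If some `n_j > n/2` then such `j` is unique, the worst-case entropy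
`H^wc = ∑ᵢ log₂ C(n, nᵢ) − log₂ n` can be rewritten replacing `C(n, n_j)` by
`C(n, n − n_j)`, and it satisfies `H^wc ≥ n* − log₂ n` where
`n* = ∑_{i ≠ j} nᵢ + (n − n_j)`. -/
theorem stmt8 (σ n : ℕ) (hn : 1 ≤ n) (nd : Fin σ → ℕ)
    (hsum : ∑ i, nd i = n - 1) (j : Fin σ) (hj : (n : ℝ) / 2 < (nd j : ℝ)) :
    (∀ j' : Fin σ, (n : ℝ) / 2 < (nd j' : ℝ) → j' = j) ∧
    ((∑ i, Real.logb 2 (Nat.choose n (nd i))) - Real.logb 2 n =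
      (∑ i ∈ Finset.univ.erase j, Real.logb 2 (Nat.choose n (nd i))) +
        Real.logb 2 (Nat.choose n (n - nd j)) - Real.logb 2 n) ∧
    ((∑ i ∈ Finset.univ.erase j, (nd i : ℝ)) + ((n : ℝ) - (nd j : ℝ)) -
        Real.logb 2 n ≤
      (∑ i, Real.logb 2 (Nat.choose n (nd i))) - Real.logb 2 n) :=
  stmt8_general σ n nd hsum j hj
end

section
/- For every h ≥ 1 let S_h be the complete balanced binary trie of height h over the alphabet {a, b}, i.e., the set of all strings over {a, b} of length at most h, with n = 2^{h+1} − 1 nodes. Then the number of XBWT runs of S_h is r = (n + 1)/2. -/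
/-!
A node `u` of `S_h` has the children `u·a` and `u·b` exactly when `|u| < h`, so `r_a = r_b` is the
number of maximal blocks of inner nodes in the co-lexicographic order. Since reversal maps `S_h`
onto itself, that order is the lexicographic (preorder) listing of the complete binary tree: the
root, then the listing of the `a`-subtree, then that of the `b`-subtree. The root is followed by
the inner node `a` and the `a`-subtree ends with a leaf, so the number of blocks doubles with each
level. With one block for `h = 1` this gives `r = 2 · 2^(h-1) = (n + 1)/2`.
-/

def colexLe (σ : ℕ) (s t : List (Fin σ)) : Prop := s.reverse ≤ t.reverse

instance (σ : ℕ) : DecidableRel (colexLe σ) :=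
  fun s t => inferInstanceAs (Decidable (s.reverse ≤ t.reverse))

instance (σ : ℕ) : IsTrans (List (Fin σ)) (colexLe σ) :=
  ⟨fun _ _ _ h1 h2 => le_trans h1 h2⟩

instance (σ : ℕ) : IsAntisymm (List (Fin σ)) (colexLe σ) :=
  ⟨fun _ _ h1 h2 => List.reverse_injective (le_antisymm h1 h2)⟩

instance (σ : ℕ) : IsTotal (List (Fin σ)) (colexLe σ) :=
  ⟨fun a b => le_total a.reverse b.reverse⟩

/-- The number `r` of XBWT runs of a trie `S`: with `u_1, …, u_n` the nodes of
`S` in co-lexicographic order (0-indexed below), `r = ∑_{c} r_c` where `r_c`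
counts the indices `i` such that `u_i·c ∈ S` and either `i = n` or
`u_{i+1}·c ∉ S`. -/
def xbwtRuns (σ : ℕ) (S : Finset (List (Fin σ))) : ℕ :=
  ∑ c : Fin σ,
    ((Finset.range (S.sort (colexLe σ)).length).filter fun i =>
      (S.sort (colexLe σ)).getD i [] ++ [c] ∈ S ∧
      (i = (S.sort (colexLe σ)).length - 1 ∨
        (S.sort (colexLe σ)).getD (i + 1) [] ++ [c] ∉ S)).card

section RunEnds

variable {α β : Type*} (p : α → Prop) [DecidablePred p]

/-- The number of maximal blocks of `p`-elements of `l` that end inside `l`, when `l` is followed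
by an element satisfying `p` exactly if `q` holds. -/
def runEnds : List α → Bool → ℕ
  | [], _ => 0
  | [a], q => if p a ∧ !q then 1 else 0
  | a :: b :: t, q => (if p a ∧ ¬p b then 1 else 0) + runEnds (b :: t) q

lemma runEnds_append (l : List α) (b : α) (t : List α) (q : Bool) :
    runEnds p (l ++ b :: t) q = runEnds p l (p b) + runEnds p (b :: t) q := by
  induction l with
  | nil => simp [runEnds]
  | cons a l ih =>
    cases l with
    | nil => by_cases p a <;> by_cases p b <;> simp [runEnds, *]
    | cons c l => simp only [List.cons_append] at ih ⊢; simp only [runEnds, ih]; omega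

lemma runEnds_map (f : β → α) (l : List β) (q : Bool) :
    runEnds p (l.map f) q = runEnds (p ∘ f) l q := by
  induction l with
  | nil => rfl
  | cons a l ih => cases l with
    | nil => rfl
    | cons b t => simp only [List.map_cons] at ih ⊢; simp [runEnds, ih]

lemma card_filter_eq_runEnds (d : α) (L : List α) :
    ((Finset.range L.length).filter fun i =>
      p (L.getD i d) ∧ (i = L.length - 1 ∨ ¬p (L.getD (i + 1) d))).card
      = runEnds p L false := by
  induction L with
  | nil => simp [runEnds]
  | cons a l ih =>
    cases l with
    | nil => by_cases p a <;> simp [runEnds, Finset.filter_singleton, *]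
    | cons b t =>
      rw [Finset.card_filter, List.length_cons, Finset.sum_range_succ']
      simp only [List.getD_cons_succ, List.getD_cons_zero, List.length_cons, Nat.add_sub_cancel,
        Nat.add_right_cancel_iff, ← Finset.card_filter] at ih ⊢
      rw [ih, runEnds, add_comm]
      simp

lemma runEnds_congr {p' : α → Prop} [DecidablePred p'] (hp : ∀ x, p x ↔ p' x) (l : List α)
    (q : Bool) : runEnds p l q = runEnds p' l q := by
  obtain rfl : p = p' := funext fun x => propext (hp x)
  congr

end RunEnds

lemma xbwtRuns_eq_sum_runEnds (σ : ℕ) (S : Finset (List (Fin σ))) :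
    xbwtRuns σ S = ∑ c : Fin σ, runEnds (· ++ [c] ∈ S) (S.sort (colexLe σ)) false :=
  Finset.sum_congr rfl fun c _ => card_filter_eq_runEnds (· ++ [c] ∈ S) [] _

def binaryStringsUpTo : ℕ → List (List (Fin 2))
  | 0 => [[]]
  | h + 1 =>
    [] :: ((binaryStringsUpTo h).map (List.cons 0) ++ (binaryStringsUpTo h).map (List.cons 1))

lemma mem_binaryStringsUpTo {h : ℕ} {l : List (Fin 2)} :
    l ∈ binaryStringsUpTo h ↔ l.length ≤ h := by
  induction h generalizing l with
  | zero => simp [binaryStringsUpTo]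
  | succ h ih =>
    rcases l with _ | ⟨c, l⟩
    · simp [binaryStringsUpTo]
    · fin_cases c <;> simp [binaryStringsUpTo, ih]

lemma nodup_binaryStringsUpTo (h : ℕ) : (binaryStringsUpTo h).Nodup := by
  induction h with
  | zero => simp [binaryStringsUpTo]
  | succ h ih =>
    simp only [binaryStringsUpTo, List.nodup_cons, List.nodup_append]
    refine ⟨by simp, ih.map List.cons_injective, ih.map List.cons_injective, ?_⟩
    simp

lemma length_binaryStringsUpTo (h : ℕ) : (binaryStringsUpTo h).length = 2 ^ (h + 1) - 1 := by
  induction h with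
  | zero => rfl
  | succ h ih =>
    have := Nat.one_le_two_pow (n := h + 1)
    simp only [binaryStringsUpTo, List.length_cons, List.length_append, List.length_map, ih,
      pow_succ 2 (h + 1)]
    omega

lemma pairwise_le_binaryStringsUpTo (h : ℕ) : (binaryStringsUpTo h).Pairwise (· ≤ ·) := by
  induction h with
  | zero => simp [binaryStringsUpTo]
  | succ h ih =>
    simp only [binaryStringsUpTo, List.pairwise_cons, List.pairwise_append, List.pairwise_map,
      List.mem_map]
    refine ⟨fun u _ => ?_, ih.imp (List.cons_le_cons _), ih.imp (List.cons_le_cons _), ?_⟩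
    · rcases u with _ | ⟨c, u⟩
      exacts [le_rfl, le_of_lt List.Lex.nil]
    · rintro _ ⟨x, -, rfl⟩ _ ⟨y, -, rfl⟩
      exact le_of_lt (List.Lex.rel (by decide))

lemma runEnds_binaryStringsUpTo (k : ℕ) (q : Bool) :
    runEnds (fun u => u.length < k + 1) (binaryStringsUpTo (k + 1)) q = 2 ^ k := by
  induction k generalizing q with
  | zero => cases q <;> rfl
  | succ k ih =>
    have hcons (c : Fin 2) (q : Bool) :
        runEnds (fun u => u.length < k + 2) ((binaryStringsUpTo (k + 1)).map (List.cons c)) q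
          = 2 ^ k := by
      rw [runEnds_map, runEnds_congr _ (p' := fun u => u.length < k + 1) (by simp), ih]
    obtain ⟨t, ht⟩ : ∃ t, binaryStringsUpTo (k + 1) = [] :: t := ⟨_, rfl⟩
    calc runEnds (fun u => u.length < k + 2) (binaryStringsUpTo (k + 2)) q
        = runEnds (fun u => u.length < k + 2) ((binaryStringsUpTo (k + 1)).map (List.cons 0)
            ++ (binaryStringsUpTo (k + 1)).map (List.cons 1)) q := by
          rw [binaryStringsUpTo, ht]; simp [runEnds]
      _ = 2 ^ (k + 1) := by
          have hmap1 :
              (binaryStringsUpTo (k + 1)).map (List.cons 1) = [1] :: t.map (List.cons 1) := by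
            rw [ht, List.map_cons]
          rw [hmap1, runEnds_append, ← hmap1, hcons, hcons, pow_succ]
          omega

lemma sort_colexLe_eq_map_reverse {h : ℕ} {S : Finset (List (Fin 2))}
    (hS : ∀ l, l ∈ S ↔ l.length ≤ h) :
    S.sort (colexLe 2) = (binaryStringsUpTo h).map List.reverse := by
  obtain rfl : S = ((binaryStringsUpTo h).map List.reverse).toFinset := by
    ext l
    simp [hS, List.mem_map_of_involutive List.reverse_involutive, mem_binaryStringsUpTo]
  refine (List.toFinset_sort _ ((nodup_binaryStringsUpTo h).map List.reverse_injective)).2 ?_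
  exact List.pairwise_map.2 ((pairwise_le_binaryStringsUpTo h).imp fun hle => by simpa [colexLe])

/-- For the complete balanced binary trie `S_h` of height `h ≥ 1` (the set of
all binary strings of length at most `h`), which has `n = 2^{h+1} − 1` nodes,
the number of XBWT runs is `r = (n + 1)/2`. -/
theorem stmt10 (h : ℕ) (hh : 1 ≤ h) (S : Finset (List (Fin 2)))
    (hS : ∀ l : List (Fin 2), l ∈ S ↔ l.length ≤ h) :
    S.card = 2 ^ (h + 1) - 1 ∧ xbwtRuns 2 S = (S.card + 1) / 2 := by
  obtain ⟨k, rfl⟩ : ∃ k, h = k + 1 := ⟨h - 1, by omega⟩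
  have hsort := sort_colexLe_eq_map_reverse hS
  have hcard : S.card = 2 ^ (k + 2) - 1 := by
    rw [← Finset.length_sort (colexLe 2), hsort, List.length_map, length_binaryStringsUpTo]
  have hruns (c : Fin 2) : runEnds (· ++ [c] ∈ S) (S.sort (colexLe 2)) false = 2 ^ k := by
    rw [hsort, runEnds_map, runEnds_congr _ (p' := fun u => u.length < k + 1) (by simp [hS]),
      runEnds_binaryStringsUpTo]
  have := Nat.one_le_two_pow (n := k + 1)
  rw [xbwtRuns_eq_sum_runEnds, Fin.sum_univ_two, hruns, hruns, hcard, pow_succ 2 (k + 1)]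
  omega
end

section
/- For every h ≥ 1 let S_h be the complete balanced binary trie of height h over the alphabet {a, b}, i.e., the set of all strings over {a, b} of length at most h, with n = 2^{h+1} − 1 nodes. In the co-lexicographic ordering u_1, …, u_n of the nodes of S_h, every maximal run of consecutive leaves (nodes u_i with no extension u_i·c in S_h) consists of exactly two nodes, and the number of such maximal leaf runs is (n + 1)/4. -/
/-- `leafAt S i` holds when the `i`-th node (0-indexed) of `S` in
co-lexicographic order is a leaf, i.e. has no extension by one symbol in `S`. -/
def leafAt (σ : ℕ) (S : Finset (List (Fin σ))) (i : ℕ) : Prop :=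
  ∀ c : Fin σ, (S.sort (colexLe σ)).getD i [] ++ [c] ∉ S

instance (σ : ℕ) (S : Finset (List (Fin σ))) : DecidablePred (leafAt σ S) :=
  fun i => inferInstanceAs
    (Decidable (∀ c : Fin σ, (S.sort (colexLe σ)).getD i [] ++ [c] ∉ S))

open Finset

theorem sort_colexLe_eq_map_reverse_s11 {σ : ℕ} {S : Finset (List (Fin σ))}
    {L : List (List (Fin σ))} (hL : L.Pairwise (· < ·)) (hS : ∀ w, w ∈ S ↔ w.reverse ∈ L) :
    S.sort (colexLe σ) = L.map List.reverse := by
  have hsorted : (L.map List.reverse).Pairwise (colexLe σ) :=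
    List.pairwise_map.2 (hL.imp fun hab => by simpa [colexLe] using hab.le)
  have hnodup : (L.map List.reverse).Nodup :=
    hL.nodup.map List.reverse_injective
  refine List.Perm.eq_of_pairwise' (S.pairwise_sort _) hsorted
    ((S.sort_perm_toList _).trans ?_)
  refine (List.perm_ext_iff_of_nodup S.nodup_toList hnodup).2 fun w => ?_
  simp only [Finset.mem_toList, hS, List.mem_map]
  exact ⟨fun hw => ⟨_, hw, List.reverse_reverse w⟩, by rintro ⟨v, hv, rfl⟩; simpa using hv⟩

theorem leafAt_iff_length_eq {σ h : ℕ} (hσ : 0 < σ) {S : Finset (List (Fin σ))}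
    (hS : ∀ w, w ∈ S ↔ w.length ≤ h) (i : ℕ) :
    leafAt σ S i ↔ ((S.sort (colexLe σ)).getD i []).length = h := by
  have hw : ((S.sort (colexLe σ)).getD i []).length ≤ h := by
    rw [List.getD_eq_getElem?_getD]
    cases hi : (S.sort (colexLe σ))[i]? with
    | none => simp
    | some w => exact (hS w).1 ((S.mem_sort _).1 (List.mem_of_getElem? hi))
  simp only [leafAt, hS, List.length_append, List.length_singleton, not_le]
  exact ⟨fun hleaf => by have := hleaf ⟨0, hσ⟩; omega, fun hlen _ => by omega⟩

def wordsUpTo : ℕ → List (List (Fin 2))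
  | 0 => [[]]
  | h + 1 => [] :: ((wordsUpTo h).map (List.cons 0) ++ (wordsUpTo h).map (List.cons 1))

theorem mem_wordsUpTo {h : ℕ} {w : List (Fin 2)} : w ∈ wordsUpTo h ↔ w.length ≤ h := by
  induction h generalizing w with
  | zero => simp [wordsUpTo]
  | succ h ih =>
    cases w with
    | nil => simp [wordsUpTo]
    | cons c w =>
      have hc : c = 0 ∨ c = 1 := by fin_cases c <;> simp
      rcases hc with rfl | rfl <;> simp [wordsUpTo, ih]

theorem pairwise_lt_wordsUpTo (h : ℕ) : (wordsUpTo h).Pairwise (· < ·) := by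
  induction h with
  | zero => simp [wordsUpTo]
  | succ h ih =>
    refine List.pairwise_cons.2 ⟨?_, List.pairwise_append.2 ⟨?_, ?_, ?_⟩⟩
    · simp only [List.mem_append, List.mem_map]
      rintro _ (⟨v, -, rfl⟩ | ⟨v, -, rfl⟩) <;> exact List.nil_lt_cons _ _
    · exact List.pairwise_map.2 (ih.imp fun hab => List.cons_lt_cons_iff.2 (.inr ⟨rfl, hab⟩))
    · exact List.pairwise_map.2 (ih.imp fun hab => List.cons_lt_cons_iff.2 (.inr ⟨rfl, hab⟩))
    · simp only [List.mem_map]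
      rintro _ ⟨v, -, rfl⟩ _ ⟨w, -, rfl⟩
      exact List.cons_lt_cons_iff.2 (.inl (by decide))

def leafPattern : ℕ → List Bool
  | 0 => [true]
  | h + 1 => false :: (leafPattern h ++ leafPattern h)

theorem leafPattern_eq_map (h : ℕ) :
    leafPattern h = (wordsUpTo h).map (fun w => decide (w.length = h)) := by
  induction h with
  | zero => rfl
  | succ h ih => simp [leafPattern, wordsUpTo, ih, Function.comp_def]

theorem length_leafPattern (h : ℕ) : (leafPattern h).length + 1 = 2 ^ (h + 1) := by
  induction h with
  | zero => rfl
  | succ h ih => simp only [leafPattern, List.length_cons, List.length_append, pow_succ]; omega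

theorem sort_colexLe_eq_map_reverse_wordsUpTo {h : ℕ} {S : Finset (List (Fin 2))}
    (hS : ∀ w, w ∈ S ↔ w.length ≤ h) :
    S.sort (colexLe 2) = (wordsUpTo h).map List.reverse :=
  sort_colexLe_eq_map_reverse_s11 (pairwise_lt_wordsUpTo h) fun w => by
    rw [hS, mem_wordsUpTo, List.length_reverse]

theorem card_eq_length_leafPattern {h : ℕ} {S : Finset (List (Fin 2))}
    (hS : ∀ w, w ∈ S ↔ w.length ≤ h) : S.card = (leafPattern h).length := by
  rw [← S.length_sort (colexLe 2), sort_colexLe_eq_map_reverse_wordsUpTo hS, leafPattern_eq_map,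
    List.length_map, List.length_map]

theorem leafAt_two_iff {h : ℕ} (hh : 1 ≤ h) {S : Finset (List (Fin 2))}
    (hS : ∀ w, w ∈ S ↔ w.length ≤ h) (i : ℕ) :
    leafAt 2 S i ↔ (leafPattern h).getD i false = true := by
  rw [leafAt_iff_length_eq two_pos hS, sort_colexLe_eq_map_reverse_wordsUpTo hS,
    leafPattern_eq_map]
  simp only [List.getD_eq_getElem?_getD, List.getElem?_map]
  cases (wordsUpTo h)[i]? <;> simp
  omega

def IsRunStart (L : List Bool) (i : ℕ) : Prop :=
  L.getD i false = true ∧ (i = 0 ∨ ¬ L.getD (i - 1) false = true)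

instance (L : List Bool) : DecidablePred (IsRunStart L) :=
  fun _ => inferInstanceAs (Decidable (_ ∧ _))

theorem isRunStart_cons_zero {b : Bool} {L : List Bool} : IsRunStart (b :: L) 0 ↔ b = true := by
  simp [IsRunStart]

theorem isRunStart_cons_succ {b : Bool} {L : List Bool} {j : ℕ} :
    IsRunStart (b :: L) (j + 1) ↔ IsRunStart L j ∧ (j = 0 → b = false) := by
  cases j <;> simp [IsRunStart]

theorem card_filter_isRunStart_cons (b : Bool) (L : List Bool) :
    #{i ∈ range (L.length + 1) | IsRunStart (b :: L) i} =
      #{i ∈ range L.length | IsRunStart L i} +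
        if b = true ∧ L.getD 0 false = false then 1 else 0 := by
  simp only [card_filter, sum_range_succ', isRunStart_cons_succ, isRunStart_cons_zero]
  cases L with
  | nil => cases b <;> simp
  | cons c L =>
    simp only [List.length_cons, sum_range_succ', isRunStart_cons_succ, isRunStart_cons_zero]
    cases b <;> cases c <;> simp

inductive PairBlocks : List Bool → ℕ → Prop
  | nil : PairBlocks [] 0
  | pad {L m} : PairBlocks L m → PairBlocks (false :: L) m
  | block {L m} : PairBlocks L m → PairBlocks (false :: true :: true :: L) (m + 1)

namespace PairBlocks

variable {L : List Bool} {m : ℕ}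

theorem append {L' : List Bool} {m' : ℕ} (hL : PairBlocks L m) (hL' : PairBlocks L' m') :
    PairBlocks (L ++ L') (m + m') := by
  induction hL with
  | nil => simpa using hL'
  | pad _ ih => exact ih.pad
  | block _ ih => simpa [Nat.add_right_comm] using ih.block

theorem getD_zero (hL : PairBlocks L m) : L.getD 0 false = false := by
  cases hL <;> rfl

theorem getD_of_isRunStart (hL : PairBlocks L m) {i : ℕ} (hi : IsRunStart L i) :
    L.getD (i + 1) false = true ∧ ¬ L.getD (i + 2) false = true := by
  induction hL generalizing i with
  | nil => simp [IsRunStart] at hi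
  | pad _ ih =>
    cases i with
    | zero => simp [isRunStart_cons_zero] at hi
    | succ j => exact ih (isRunStart_cons_succ.1 hi).1
  | block hL ih =>
    match i, hi with
    | 0, hi => simp [isRunStart_cons_zero] at hi
    | 1, _ => simpa using hL.getD_zero
    | 2, hi => simp [IsRunStart] at hi
    | j + 3, hi =>
      simp only [isRunStart_cons_succ] at hi
      exact ih hi.1.1.1

theorem eq_succ_of_maximal_run (hL : PairBlocks L m) {i j : ℕ} (hij : i ≤ j)
    (hrun : ∀ t, i ≤ t → t ≤ j → L.getD t false = true)
    (hstart : i = 0 ∨ ¬ L.getD (i - 1) false = true)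
    (hstop : j = L.length - 1 ∨ ¬ L.getD (j + 1) false = true) : j = i + 1 := by
  obtain ⟨hnext, hafter⟩ := hL.getD_of_isRunStart ⟨hrun i le_rfl hij, hstart⟩
  have hlt : j < i + 2 := by
    by_contra! hge
    exact hafter (hrun (i + 2) (by omega) hge)
  have hne : j ≠ i := by
    rintro rfl
    rcases hstop with hlast | hstop
    · have : j + 1 < L.length := by
        by_contra! hle
        rw [List.getD_eq_default _ _ hle] at hnext
        exact Bool.false_ne_true hnext
      omega
    · exact hstop hnext
  omega

theorem card_filter_isRunStart (hL : PairBlocks L m) :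
    #{i ∈ range L.length | IsRunStart L i} = m := by
  induction hL with
  | nil => simp
  | pad _ ih => rw [List.length_cons, card_filter_isRunStart_cons, ih]; simp
  | block hL ih =>
    rw [List.length_cons, card_filter_isRunStart_cons, List.length_cons,
      card_filter_isRunStart_cons, List.length_cons, card_filter_isRunStart_cons, ih,
      hL.getD_zero]
    simp

end PairBlocks

theorem pairBlocks_leafPattern {h : ℕ} (hh : 1 ≤ h) :
    PairBlocks (leafPattern h) (2 ^ (h - 1)) := by
  induction h, hh using Nat.le_induction with
  | base => exact PairBlocks.nil.block
  | succ h hh ih =>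
    have : 2 ^ (h - 1) + 2 ^ (h - 1) = 2 ^ (h + 1 - 1) := by
      rw [← two_mul, ← pow_succ', Nat.sub_add_cancel hh, Nat.add_sub_cancel]
    exact this ▸ (ih.append ih).pad

/-- In the co-lexicographic ordering of the nodes of the complete balanced
binary trie of height `h ≥ 1`, every maximal run of consecutive leaves consists
of exactly two nodes, and the number of maximal leaf runs is `(n + 1)/4`. -/
theorem stmt11 (h : ℕ) (hh : 1 ≤ h) (S : Finset (List (Fin 2)))
    (hS : ∀ l : List (Fin 2), l ∈ S ↔ l.length ≤ h) :
    (∀ i j : ℕ, i ≤ j → j < S.card →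
      (∀ t, i ≤ t → t ≤ j → leafAt 2 S t) →
      (i = 0 ∨ ¬ leafAt 2 S (i - 1)) →
      (j = S.card - 1 ∨ ¬ leafAt 2 S (j + 1)) →
      j = i + 1) ∧
    ((Finset.range S.card).filter
        (fun i => leafAt 2 S i ∧ (i = 0 ∨ ¬ leafAt 2 S (i - 1)))).card =
      (S.card + 1) / 4 := by
  have hblocks := pairBlocks_leafPattern hh
  simp only [leafAt_two_iff hh hS, card_eq_length_leafPattern hS]
  refine ⟨fun i j hij _ => hblocks.eq_succ_of_maximal_run hij,
    hblocks.card_filter_isRunStart.trans ?_⟩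
  rw [length_leafPattern]
  obtain ⟨k, rfl⟩ := Nat.exists_eq_add_of_le' hh
  rw [show (4 : ℕ) = 2 ^ 2 from rfl, Nat.pow_div (by omega) two_pos]
  rfl
end
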